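/- Let w_irm = [μ/‖μ‖₂, 0_d, 0_d] ∈ ℝ^{3d}. Then (i) Acc_{P_{c1}}(w_irm) = Acc_{P_{c2}}(w_irm) = 0.5·erfc(−ρ1), and (ii) for every predictor of the form w = [w', 0_d, 0_d] with ‖w'‖₂ ≤ 1, both Acc_{P_{c1}}(w) ≤ 0.5·erfc(−ρ1) and Acc_{P_{c2}}(w) ≤ 0.5·erfc(−ρ1); that is, the optimal predictor restricted to the invariant feature x1 achieves accuracy 0.5·erfc(−ρ1) on both contexts. -/

import Mathlib

/-
For `w = [w', 0, 0]` the score `wᵀx = w'ᵀx1` only sees the invariant block, whose conditional law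
`N(μy, σ²I)` is the same in both contexts. Given `y`, `w'ᵀx1 ~ N(y·w'ᵀμ, ‖w'‖²σ²)`, and the
reflection `y ↦ -y` shows that both labels are classified correctly with the same probability
`P(N(w'ᵀμ, ‖w'‖²σ²) > 0) = ½·erfc(-w'ᵀμ / (√2‖w'‖σ))`. Since `erfc` is decreasing and
`w'ᵀμ ≤ ‖w'‖‖μ‖` by Cauchy–Schwarz, this is at most `½·erfc(-ρ1)`, with equality at `w' = μ/‖μ‖`.
-/

open MeasureTheory ProbabilityTheory Real Filter
open scoped ENNReal NNReal

noncomputable section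

/-- Complementary error function `erfc x = (2/√π) ∫_x^∞ e^{−t²} dt`. -/
def erfc (x : ℝ) : ℝ := 2 / Real.sqrt Real.pi * ∫ t in Set.Ioi x, Real.exp (-t ^ 2)

/-- A vector in `ℝ^d`. -/
abbrev Vec (d : ℕ) := Fin d → ℝ

/-- The input space `ℝ^{3d}`, viewed as three blocks `x = [x1, x2, x3]`. -/
abbrev Inp (d : ℕ) := Vec d × Vec d × Vec d

/-- Euclidean dot product on `ℝ^d`. -/
def dot {d : ℕ} (v w : Vec d) : ℝ := ∑ i, v i * w i

/-- Euclidean norm on `ℝ^d`. -/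
def vnorm {d : ℕ} (v : Vec d) : ℝ := Real.sqrt (∑ i, v i ^ 2)

/-- Euclidean norm on the full input space `ℝ^{3d}`. -/
def xnorm {d : ℕ} (x : Inp d) : ℝ :=
  Real.sqrt ((∑ i, x.1 i ^ 2) + (∑ i, x.2.1 i ^ 2) + ∑ i, x.2.2 i ^ 2)

/-- Value `wᵀx` of the linear predictor `w` at input `x`. -/
def pred {d : ℕ} (w x : Inp d) : ℝ := dot w.1 x.1 + dot w.2.1 x.2.1 + dot w.2.2 x.2.2

/-- Isotropic Gaussian `N(m, v·I_d)` on `ℝ^d` (product of coordinate Gaussians). -/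
def gaussVec (d : ℕ) (m : Vec d) (v : ℝ) : Measure (Vec d) :=
  Measure.pi fun i => gaussianReal (m i) (Real.toNNReal v)

/-- Conditional law of `x` given the label `y` in context `c1`:
`x1 ~ N(μy, σ²I)`, `x2 ~ N(μy, γσ²I)`, `x3 ~ N(μ, η²I)`, independent blocks. -/
def condX1 (d : ℕ) (μ : Vec d) (σ γ η : ℝ) (y : ℝ) : Measure (Inp d) :=
  (gaussVec d (fun i => μ i * y) (σ ^ 2)).prod
    ((gaussVec d (fun i => μ i * y) (γ * σ ^ 2)).prod
      (gaussVec d μ (η ^ 2)))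

/-- Conditional law of `x` given the label `y` in context `c2`:
`x1 ~ N(μy, σ²I)`, `x2 ~ N(−μy, (σ²/γ)I)`, `x3 ~ N(−μ, η²I)`, independent blocks. -/
def condX2 (d : ℕ) (μ : Vec d) (σ γ η : ℝ) (y : ℝ) : Measure (Inp d) :=
  (gaussVec d (fun i => μ i * y) (σ ^ 2)).prod
    ((gaussVec d (fun i => -μ i * y) (σ ^ 2 / γ)).prod
      (gaussVec d (fun i => -μ i) (η ^ 2)))

/-- Joint law of `(x, y)`: `y` uniform on `{−1, 1}`, then `x ~ cond y`. -/
def jointOf {d : ℕ} (cond : ℝ → Measure (Inp d)) : Measure (Inp d × ℝ) :=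
  (2 : ℝ≥0∞)⁻¹ • (cond 1).prod (Measure.dirac (1 : ℝ))
    + (2 : ℝ≥0∞)⁻¹ • (cond (-1)).prod (Measure.dirac (-1 : ℝ))

/-- The context-`c1` distribution over `(x, y)`. -/
def Pc1 (d : ℕ) (μ : Vec d) (σ γ η : ℝ) : Measure (Inp d × ℝ) :=
  jointOf (condX1 d μ σ γ η)

/-- The context-`c2` distribution over `(x, y)`. -/
def Pc2 (d : ℕ) (μ : Vec d) (σ γ η : ℝ) : Measure (Inp d × ℝ) :=
  jointOf (condX2 d μ σ γ η)

/-- Accuracy `Acc_P(w) = P(sign(wᵀx) = y)` of linear predictor `w` under joint law `P`. -/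
def AccP {d : ℕ} (P : Measure (Inp d × ℝ)) (w : Inp d) : ℝ :=
  (P {p | Real.sign (pred w p.1) = p.2}).toReal

/-- Norm-bounded linear predictors `W1 = {w ∈ ℝ^{3d} : ‖w‖₂ ≤ 1}`. -/
def W1 (d : ℕ) : Set (Inp d) := {w | xnorm w ≤ 1}

/-- Population exponential loss `E_P[exp(−y·wᵀx)]`. -/
def expLoss {d : ℕ} (P : Measure (Inp d × ℝ)) (w : Inp d) : ℝ :=
  ∫ p, Real.exp (-(p.2 * pred w p.1)) ∂P

end

open Set

lemma erfc_nonneg (x : ℝ) : 0 ≤ erfc x :=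
  mul_nonneg (by positivity) (setIntegral_nonneg measurableSet_Ioi fun t _ => (Real.exp_pos _).le)

lemma erfc_antitone : Antitone erfc := fun x y h => by
  refine mul_le_mul_of_nonneg_left (setIntegral_mono_set ?_ ?_ (Ioi_subset_Ioi h).eventuallyLE)
    (by positivity)
  · simpa using (integrable_exp_neg_mul_sq one_pos).integrableOn
  · exact Filter.Eventually.of_forall fun t => (Real.exp_pos _).le

lemma pi_gaussianReal_map_sum_mul {ι : Type*} [Fintype ι] (m w : ι → ℝ) (v : ι → ℝ≥0) :
    (Measure.pi fun i => gaussianReal (m i) (v i)).map (fun x => ∑ i, w i * x i)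
      = gaussianReal (∑ i, w i * m i) (∑ i, (w i ^ 2).toNNReal * v i) := by
  refine Measure.ext_of_charFun (funext fun t => ?_)
  have hmeas : Measurable fun x : ι → ℝ => ∑ i, w i * x i := by fun_prop
  rw [charFun_apply_real, integral_map hmeas.aemeasurable (by fun_prop), charFun_gaussianReal]
  have hexp : ∀ x : ι → ℝ, Complex.exp (t * ↑(∑ i, w i * x i) * Complex.I)
      = ∏ i, Complex.exp ((t * w i : ℝ) * x i * Complex.I) := by
    intro x
    rw [← Complex.exp_sum]
    push_cast
    rw [Finset.mul_sum, Finset.sum_mul]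
    exact congrArg _ (Finset.sum_congr rfl fun i _ => by ring)
  simp_rw [hexp, integral_fintype_prod_eq_prod
    (fun i (y : ℝ) => Complex.exp ((t * w i : ℝ) * y * Complex.I)), ← charFun_apply_real,
    charFun_gaussianReal, ← Complex.exp_sum]
  congr 1
  push_cast
  simp only [Real.coe_toNNReal _ (sq_nonneg _), Complex.ofReal_pow]
  rw [Finset.mul_sum, Finset.sum_mul, Finset.sum_mul, Finset.sum_div, ← Finset.sum_sub_distrib]
  exact Finset.sum_congr rfl fun i _ => by ring

lemma gaussianReal_zero_one_real_Ioi (a : ℝ) :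
    (gaussianReal 0 1).real (Ioi a) = 0.5 * erfc (a / √2) := by
  have hpdf : ∀ x : ℝ, gaussianPDFReal 0 1 x = (√(2 * π))⁻¹ * Real.exp (-(x * (√2)⁻¹) ^ 2) := by
    intro x
    simp only [gaussianPDFReal, NNReal.coe_one, mul_one, sub_zero, mul_pow, inv_pow,
      Real.sq_sqrt zero_le_two]
    ring_nf
  have h2 : (0 : ℝ) < √2 := by positivity
  rw [measureReal_def, gaussianReal_apply_eq_integral 0 one_ne_zero,
    ENNReal.toReal_ofReal
      (setIntegral_nonneg measurableSet_Ioi fun x _ => gaussianPDFReal_nonneg _ _ _)]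
  simp_rw [hpdf]
  rw [integral_const_mul, integral_comp_mul_right_Ioi (fun u => Real.exp (-u ^ 2)) a (inv_pos.2 h2),
    smul_eq_mul, erfc, inv_inv, Real.sqrt_mul zero_le_two, div_eq_mul_inv a]
  field_simp
  ring

lemma gaussianReal_real_Ioi_zero (m : ℝ) {s : ℝ} (hs : 0 < s) :
    (gaussianReal m (s ^ 2).toNNReal).real (Ioi 0) = 0.5 * erfc (-(m / (√2 * s))) := by
  have hmap : gaussianReal m (s ^ 2).toNNReal
      = ((gaussianReal 0 1).map (s * ·)).map (· + m) := by
    rw [gaussianReal_map_const_mul, gaussianReal_map_add_const, mul_zero, zero_add, mul_one]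
    congr
    ext
    simp [Real.coe_toNNReal _ (sq_nonneg s)]
  have hpre : (s * ·) ⁻¹' ((· + m) ⁻¹' Ioi 0) = Ioi (-m / s) := by
    ext x
    simp only [mem_preimage, mem_Ioi, div_lt_iff₀ hs]
    constructor <;> intro <;> linarith
  rw [hmap, map_measureReal_apply (by fun_prop) measurableSet_Ioi,
    map_measureReal_apply (by fun_prop) (measurableSet_Ioi.preimage (by fun_prop)), hpre,
    gaussianReal_zero_one_real_Ioi]
  congr 2
  field_simp

lemma gaussianReal_Iio_zero (m : ℝ) (v : ℝ≥0) :
    gaussianReal m v (Iio 0) = gaussianReal (-m) v (Ioi 0) := by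
  rw [← gaussianReal_map_neg, Measure.map_apply (by fun_prop) measurableSet_Ioi]
  congr 1
  ext x
  simp

lemma gaussianReal_real_Ioi_zero_le {m r s σ : ℝ} (hσ : 0 < σ) (hs : 0 ≤ s) (hm : m ≤ s * r) :
    (gaussianReal m ((s * σ) ^ 2).toNNReal).real (Ioi 0) ≤ 0.5 * erfc (-(r / (√2 * σ))) := by
  rcases hs.eq_or_lt with rfl | hs
  · have hm : ¬ 0 < m := by simpa using hm
    have hdirac : (gaussianReal m ((0 * σ) ^ 2).toNNReal).real (Ioi 0) = 0 := by
      simp [gaussianReal_zero_var, measureReal_def, hm]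
    rw [hdirac]
    exact mul_nonneg (by norm_num) (erfc_nonneg _)
  rw [gaussianReal_real_Ioi_zero m (mul_pos hs hσ)]
  have hratio : m / s ≤ r := (div_le_iff₀ hs).2 (by linarith)
  have hdiv : m / (√2 * (s * σ)) = m / s / (√2 * σ) := by field_simp
  refine mul_le_mul_of_nonneg_left (erfc_antitone ?_) (by norm_num)
  rw [hdiv, neg_le_neg_iff]
  gcongr

lemma Real.sign_eq_one_iff {r : ℝ} : Real.sign r = 1 ↔ 0 < r := by
  unfold Real.sign; split_ifs <;> constructor <;> intro <;> linarith

lemma Real.sign_eq_neg_one_iff {r : ℝ} : Real.sign r = -1 ↔ r < 0 := by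
  unfold Real.sign; split_ifs <;> constructor <;> intro <;> linarith

namespace Vec
variable {d : ℕ}

lemma vnorm_eq_norm (v : Vec d) : vnorm v = ‖WithLp.toLp 2 v‖ := by
  simp [vnorm, EuclideanSpace.norm_eq]

lemma dot_eq_inner (v w : Vec d) : dot v w = inner ℝ (WithLp.toLp 2 v) (WithLp.toLp 2 w) := by
  simp [dot, PiLp.inner_apply, mul_comm]

lemma dot_le_vnorm_mul_vnorm (v w : Vec d) : dot v w ≤ vnorm v * vnorm w := by
  simpa [dot_eq_inner, vnorm_eq_norm] using real_inner_le_norm (WithLp.toLp 2 v) (WithLp.toLp 2 w)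

lemma dot_self (v : Vec d) : dot v v = vnorm v ^ 2 := by
  simp [dot_eq_inner, vnorm_eq_norm]

lemma vnorm_pos {v : Vec d} (hv : v ≠ 0) : 0 < vnorm v := by
  simpa [vnorm_eq_norm] using hv

lemma vnorm_smul (c : ℝ) (v : Vec d) : vnorm (c • v) = |c| * vnorm v := by
  simp [vnorm_eq_norm, norm_smul]

lemma dot_smul_left (c : ℝ) (v w : Vec d) : dot (c • v) w = c * dot v w := by
  simp [dot_eq_inner, inner_smul_left]

end Vec

instance {d : ℕ} (m : Vec d) (v : ℝ) : IsProbabilityMeasure (gaussVec d m v) := by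
  unfold gaussVec; infer_instance

lemma measurable_dot {d : ℕ} (w : Vec d) : Measurable (dot w) := by
  unfold dot; fun_prop

lemma gaussVec_map_dot {d : ℕ} (w m : Vec d) (v : ℝ) :
    (gaussVec d m v).map (dot w) = gaussianReal (dot w m) (vnorm w ^ 2 * v).toNNReal := by
  unfold gaussVec
  rw [show dot w = fun x => ∑ i, w i * x i from rfl, pi_gaussianReal_map_sum_mul,
    Real.toNNReal_mul (sq_nonneg _), vnorm, Real.sq_sqrt (by positivity),
    Real.toNNReal_sum_of_nonneg fun i _ => sq_nonneg _, Finset.sum_mul]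

lemma jointOf_sign_eq {d : ℕ} (cond : ℝ → Measure (Inp d)) [∀ y, SFinite (cond y)]
    (f : Inp d → ℝ) :
    jointOf cond {p | Real.sign (f p.1) = p.2}
      = 2⁻¹ * cond 1 {x | 0 < f x} + 2⁻¹ * cond (-1) {x | f x < 0} := by
  simp only [jointOf, Measure.add_apply, Measure.smul_apply, smul_eq_mul, Measure.prod_dirac,
    (measurableEmbedding_prod_mk_right _).map_apply, preimage_ofPred_eq,
    Real.sign_eq_one_iff, Real.sign_eq_neg_one_iff]

lemma AccP_jointOf_gaussVec_prod {d : ℕ} (μ : Vec d) (σ : ℝ)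
    (ρ : ℝ → Measure (Vec d × Vec d)) [∀ y, IsProbabilityMeasure (ρ y)] (w' : Vec d) :
    AccP (jointOf fun y => (gaussVec d (fun i => μ i * y) (σ ^ 2)).prod (ρ y)) (w', 0, 0)
      = (gaussianReal (dot w' μ) ((vnorm w' * σ) ^ 2).toNNReal).real (Ioi 0) := by
  have hpred : ∀ x : Inp d, pred (w', 0, 0) x = dot w' x.1 := by simp [pred, dot]
  have hfst : ∀ (y : ℝ) (s : Set ℝ), MeasurableSet s →
      (gaussVec d (fun i => μ i * y) (σ ^ 2)).prod (ρ y) (Prod.fst ⁻¹' (dot w' ⁻¹' s))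
        = gaussianReal (dot w' μ * y) ((vnorm w' * σ) ^ 2).toNNReal s := by
    intro y s hs
    rw [← prod_univ, Measure.prod_prod, measure_univ, mul_one,
      ← Measure.map_apply (measurable_dot w') hs, gaussVec_map_dot, mul_pow]
    congr 2
    simp only [dot, Finset.sum_mul, mul_assoc]
  have hpos : {x : Inp d | 0 < pred (w', 0, 0) x} = Prod.fst ⁻¹' (dot w' ⁻¹' Ioi 0) := by
    ext; simp [hpred]
  have hneg : {x : Inp d | pred (w', 0, 0) x < 0} = Prod.fst ⁻¹' (dot w' ⁻¹' Iio 0) := by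
    ext; simp [hpred]
  rw [AccP, jointOf_sign_eq, hpos, hneg, hfst 1 _ measurableSet_Ioi, hfst (-1) _ measurableSet_Iio,
    gaussianReal_Iio_zero, mul_one, mul_neg_one, neg_neg, ← add_mul, ENNReal.inv_two_add_inv_two,
    one_mul, measureReal_def]

theorem irm_accuracy_general (d : ℕ) (μ : Vec d) (hμ : μ ≠ 0)
    (σ γ η : ℝ) (hσ : 0 < σ) :
    AccP (Pc1 d μ σ γ η) (((vnorm μ)⁻¹ • μ, (0 : Vec d), (0 : Vec d)) : Inp d)
        = 0.5 * erfc (-(vnorm μ / (Real.sqrt 2 * σ))) ∧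
    AccP (Pc2 d μ σ γ η) (((vnorm μ)⁻¹ • μ, (0 : Vec d), (0 : Vec d)) : Inp d)
        = 0.5 * erfc (-(vnorm μ / (Real.sqrt 2 * σ))) ∧
    ∀ w' : Vec d, vnorm w' ≤ 1 →
      AccP (Pc1 d μ σ γ η) ((w', (0 : Vec d), (0 : Vec d)) : Inp d)
          ≤ 0.5 * erfc (-(vnorm μ / (Real.sqrt 2 * σ))) ∧
      AccP (Pc2 d μ σ γ η) ((w', (0 : Vec d), (0 : Vec d)) : Inp d)
          ≤ 0.5 * erfc (-(vnorm μ / (Real.sqrt 2 * σ))) := by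
  have acc1 (w' : Vec d) : AccP (Pc1 d μ σ γ η) (w', 0, 0)
      = (gaussianReal (dot w' μ) ((vnorm w' * σ) ^ 2).toNNReal).real (Ioi 0) :=
    AccP_jointOf_gaussVec_prod μ σ _ w'
  have acc2 (w' : Vec d) : AccP (Pc2 d μ σ γ η) (w', 0, 0)
      = (gaussianReal (dot w' μ) ((vnorm w' * σ) ^ 2).toNNReal).real (Ioi 0) :=
    AccP_jointOf_gaussVec_prod μ σ _ w'
  have hμ0 : 0 < vnorm μ := Vec.vnorm_pos hμ
  have hnorm : vnorm ((vnorm μ)⁻¹ • μ) = 1 := by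
    rw [Vec.vnorm_smul, abs_inv, abs_of_pos hμ0, inv_mul_cancel₀ hμ0.ne']
  have hdot : dot ((vnorm μ)⁻¹ • μ) μ = vnorm μ := by
    rw [Vec.dot_smul_left, Vec.dot_self]
    field_simp
  have optimal : (gaussianReal (dot ((vnorm μ)⁻¹ • μ) μ)
      ((vnorm ((vnorm μ)⁻¹ • μ) * σ) ^ 2).toNNReal).real (Ioi 0)
        = 0.5 * erfc (-(vnorm μ / (√2 * σ))) := by
    rw [hnorm, hdot, one_mul, gaussianReal_real_Ioi_zero _ hσ]
  have bound (w' : Vec d) : (gaussianReal (dot w' μ) ((vnorm w' * σ) ^ 2).toNNReal).real (Ioi 0)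
      ≤ 0.5 * erfc (-(vnorm μ / (√2 * σ))) :=
    gaussianReal_real_Ioi_zero_le hσ (Real.sqrt_nonneg _) (Vec.dot_le_vnorm_mul_vnorm w' μ)
  exact ⟨(acc1 _).trans optimal, (acc2 _).trans optimal,
    fun w' _ => ⟨(acc1 w').trans_le (bound w'), (acc2 w').trans_le (bound w')⟩⟩

theorem irm_accuracy (d : ℕ) (hd : 1 ≤ d) (μ : Vec d) (hμ : μ ≠ 0)
    (σ γ η : ℝ) (hσ : 0 < σ) (hγ : 0 < γ) (hη : 0 < η) :
    AccP (Pc1 d μ σ γ η) (((vnorm μ)⁻¹ • μ, (0 : Vec d), (0 : Vec d)) : Inp d)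
        = 0.5 * erfc (-(vnorm μ / (Real.sqrt 2 * σ))) ∧
    AccP (Pc2 d μ σ γ η) (((vnorm μ)⁻¹ • μ, (0 : Vec d), (0 : Vec d)) : Inp d)
        = 0.5 * erfc (-(vnorm μ / (Real.sqrt 2 * σ))) ∧
    ∀ w' : Vec d, vnorm w' ≤ 1 →
      AccP (Pc1 d μ σ γ η) ((w', (0 : Vec d), (0 : Vec d)) : Inp d)
          ≤ 0.5 * erfc (-(vnorm μ / (Real.sqrt 2 * σ))) ∧
      AccP (Pc2 d μ σ γ η) ((w', (0 : Vec d), (0 : Vec d)) : Inp d)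
          ≤ 0.5 * erfc (-(vnorm μ / (Real.sqrt 2 * σ))) :=
  irm_accuracy_general d μ hμ σ γ η hσ
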